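/- Let M ∈ {0,1}^{m×n} be a biadjacency matrix with |E| ones and maximum biclique size |E*|, with |E| > |E*|. If p* = min_{u,v} ‖M − uv^T‖_W² (where W_{ij} = 1 on ones of M and W_{ij} = d ≥ (2|E|)⁶ on zeros of M) is known, then |E*| = |E| − ⌈p*⌉. -/

import Mathlib

def IsBiclique {m n : ℕ} (M : Matrix (Fin m) (Fin n) ℝ)
    (I : Finset (Fin m)) (J : Finset (Fin n)) : Prop :=
  ∀ i ∈ I, ∀ j ∈ J, M i j = 1

/-!
The indicator vectors of a maximum biclique have weighted error exactly `|E| - |E*|`.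
Conversely, let `u vᵀ` have error below `|E| - |E*| - 1 < |E|`. The weight `d` makes every
entry of `u vᵀ` on a zero of `M` tiny, and every entry of `u vᵀ` is below `2 √|E|`. Hence the
ones of `M` at which `u vᵀ` is within `1 - a` of `1`, for `a = 1 / (2 |E|)`, span a biclique:
for two of them `(i, j)` and `(k, l)`, the rank-one identity
`(u vᵀ)ᵢⱼ (u vᵀ)ₖₗ = (u vᵀ)ᵢₗ (u vᵀ)ₖⱼ` leaves no room for a zero at `(i, l)`. So at most
`|E*|` ones are near `1`, each of the others costs at least `(1 - a)²`, and
`(|E| - |E*|) (1 - a)² > |E| - |E*| - 1`.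
-/

open Finset

variable {m n : ℕ}

def weightedError (W M : Matrix (Fin m) (Fin n) ℝ) (u : Fin m → ℝ) (v : Fin n → ℝ) :
    ℝ :=
  ∑ i, ∑ j, W i j * (M i j - u i * v j) ^ 2

noncomputable def oneEntries (M : Matrix (Fin m) (Fin n) ℝ) : Finset (Fin m × Fin n) :=
  {p | M p.1 p.2 = 1}

noncomputable def nearOneEntries (M : Matrix (Fin m) (Fin n) ℝ) (u : Fin m → ℝ)
    (v : Fin n → ℝ) (a : ℝ) : Finset (Fin m × Fin n) :=
  {p ∈ oneEntries M | (1 - u p.1 * v p.2) ^ 2 < (1 - a) ^ 2}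

lemma weightedError_eq_sum_prod (W M : Matrix (Fin m) (Fin n) ℝ) (u : Fin m → ℝ)
    (v : Fin n → ℝ) :
    weightedError W M u v =
      ∑ p : Fin m × Fin n, W p.1 p.2 * (M p.1 p.2 - u p.1 * v p.2) ^ 2 :=
  (Fintype.sum_prod_type' (f := fun i j => W i j * (M i j - u i * v j) ^ 2)).symm

lemma entry_le_weightedError {W : Matrix (Fin m) (Fin n) ℝ} (hW : ∀ i j, 0 ≤ W i j)
    (M : Matrix (Fin m) (Fin n) ℝ) (u : Fin m → ℝ) (v : Fin n → ℝ) (i : Fin m) (j : Fin n) :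
    W i j * (M i j - u i * v j) ^ 2 ≤ weightedError W M u v := by
  have hnonneg : ∀ i j, 0 ≤ W i j * (M i j - u i * v j) ^ 2 := fun i j =>
    mul_nonneg (hW i j) (sq_nonneg _)
  calc W i j * (M i j - u i * v j) ^ 2
      ≤ ∑ j, W i j * (M i j - u i * v j) ^ 2 :=
        single_le_sum (fun j _ => hnonneg i j) (mem_univ j)
    _ ≤ weightedError W M u v :=
        single_le_sum (f := fun i => ∑ j, W i j * (M i j - u i * v j) ^ 2)
          (fun i _ => sum_nonneg fun j _ => hnonneg i j) (mem_univ i)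

lemma card_le_of_isBiclique_image {M : Matrix (Fin m) (Fin n) ℝ} {Estar : ℕ}
    (hmax : ∀ I J, IsBiclique M I J → #I * #J ≤ Estar) {S : Finset (Fin m × Fin n)}
    (hS : IsBiclique M (S.image Prod.fst) (S.image Prod.snd)) : #S ≤ Estar :=
  calc #S ≤ #(S.image Prod.fst ×ˢ S.image Prod.snd) := card_le_card subset_product
    _ = #(S.image Prod.fst) * #(S.image Prod.snd) := card_product _ _
    _ ≤ Estar := hmax _ _ hS

lemma sub_one_lt_mul_one_sub_sq {c e : ℝ} (hc : 1 ≤ c) (hce : c ≤ e) :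
    c - 1 < c * (1 - 1 / (2 * e)) ^ 2 := by
  have he : 0 < e := by linarith
  have hexpand : c * (1 - 1 / (2 * e)) ^ 2 = c - c / e + c / (4 * e ^ 2) := by
    field_simp; ring
  have hce' : c / e ≤ 1 := (div_le_one he).mpr hce
  have hpos : 0 < c / (4 * e ^ 2) := by positivity
  linarith

section ZeroOne

variable {M W : Matrix (Fin m) (Fin n) ℝ} {d : ℝ}

lemma sum_eq_card_oneEntries (hM : ∀ i j, M i j = 0 ∨ M i j = 1) :
    ∑ i, ∑ j, M i j = #(oneEntries M) := by
  rw [← Fintype.sum_prod_type' (f := fun i j => M i j), oneEntries, card_filter,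
    Nat.cast_sum]
  refine sum_congr rfl fun p _ => ?_
  rcases hM p.1 p.2 with h | h <;> simp [h]

lemma weightedError_biclique_indicator (hM : ∀ i j, M i j = 0 ∨ M i j = 1)
    (hW : ∀ i j, W i j = if M i j = 1 then 1 else d) {I : Finset (Fin m)} {J : Finset (Fin n)}
    (hIJ : IsBiclique M I J) :
    weightedError W M (fun i => if i ∈ I then 1 else 0) (fun j => if j ∈ J then 1 else 0)
      = #(oneEntries M) - #I * #J := by
  have hentry : ∀ i j,
      W i j * (M i j - (if i ∈ I then 1 else 0) * (if j ∈ J then 1 else 0)) ^ 2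
      = M i j - (if i ∈ I then 1 else 0) * (if j ∈ J then 1 else 0) := by
    intro i j
    by_cases hi : i ∈ I <;> by_cases hj : j ∈ J
    · simp [hW, hIJ i hi j hj, hi, hj]
    all_goals rcases hM i j with h | h <;> simp [hW, h, hi, hj]
  simp only [weightedError, hentry, sum_sub_distrib, ← sum_mul_sum, sum_boole,
    sum_eq_card_oneEntries hM]
  simp

lemma weight_nonneg (hW : ∀ i j, W i j = if M i j = 1 then 1 else d) (hd : 0 ≤ d)
    (i : Fin m) (j : Fin n) : 0 ≤ W i j := by
  rw [hW]; split_ifs <;> linarith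

lemma lt_of_mem_nearOneEntries {u : Fin m → ℝ} {v : Fin n → ℝ} {a : ℝ} (ha : a ≤ 1)
    {p : Fin m × Fin n} (hp : p ∈ nearOneEntries M u v a) : a < u p.1 * v p.2 := by
  have := (abs_lt_of_sq_lt_sq' (mem_filter.mp hp).2 (by linarith)).2
  linarith

lemma card_sub_card_nearOneEntries_mul_le (hW : ∀ i j, W i j = if M i j = 1 then 1 else d)
    (hd : 0 ≤ d) (a : ℝ) (u : Fin m → ℝ) (v : Fin n → ℝ) :
    ((#(oneEntries M) : ℝ) - #(nearOneEntries M u v a)) * (1 - a) ^ 2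
      ≤ weightedError W M u v := by
  set far := {p ∈ oneEntries M | ¬ (1 - u p.1 * v p.2) ^ 2 < (1 - a) ^ 2}
  have hcard : (#(oneEntries M) : ℝ) - #(nearOneEntries M u v a) = #far := by
    rw [← card_filter_add_card_filter_not (s := oneEntries M)
      (fun p => (1 - u p.1 * v p.2) ^ 2 < (1 - a) ^ 2), nearOneEntries]
    push_cast; ring
  have hfar : ∀ p ∈ far, (1 - a) ^ 2 ≤ W p.1 p.2 * (M p.1 p.2 - u p.1 * v p.2) ^ 2 := by
    intro p hp
    simp only [far, oneEntries, mem_filter, mem_univ, true_and, not_lt] at hp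
    simp [hW, hp.1, hp.2]
  rw [hcard, weightedError_eq_sum_prod, ← nsmul_eq_mul]
  calc #far • (1 - a) ^ 2 ≤ ∑ p ∈ far, W p.1 p.2 * (M p.1 p.2 - u p.1 * v p.2) ^ 2 :=
        card_nsmul_le_sum _ _ _ hfar
    _ ≤ _ := sum_le_sum_of_subset_of_nonneg (subset_univ _) fun p _ _ =>
        mul_nonneg (weight_nonneg hW hd _ _) (sq_nonneg _)

lemma sq_lt_of_weightedError_lt (hM : ∀ i j, M i j = 0 ∨ M i j = 1)
    (hW : ∀ i j, W i j = if M i j = 1 then 1 else d) (hd : 1 ≤ d) {e : ℝ} (he : 1 ≤ e)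
    {u : Fin m → ℝ} {v : Fin n → ℝ} (h : weightedError W M u v < e) (i : Fin m) (j : Fin n) :
    (u i * v j) ^ 2 < 4 * e := by
  have hentry :=
    (entry_le_weightedError (weight_nonneg hW (by linarith)) M u v i j).trans_lt h
  rcases hM i j with h0 | h1
  · simp only [hW, h0, zero_ne_one, if_false, zero_sub, neg_sq] at hentry
    nlinarith [sq_nonneg (u i * v j)]
  · simp only [hW, h1, if_true, one_mul] at hentry
    nlinarith [sq_nonneg (u i * v j - 2)]

lemma isBiclique_image_of_weightedError_lt (hM : ∀ i j, M i j = 0 ∨ M i j = 1)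
    (hW : ∀ i j, W i j = if M i j = 1 then 1 else d) (hd : 1 ≤ d) {e : ℝ} (he : 1 ≤ e)
    {u : Fin m → ℝ} {v : Fin n → ℝ} (h : weightedError W M u v < e) {a : ℝ} (ha0 : 0 ≤ a)
    (ha : 4 * e ^ 2 ≤ a ^ 4 * d) {S : Finset (Fin m × Fin n)}
    (hS : ∀ p ∈ S, a < u p.1 * v p.2) :
    IsBiclique M (S.image Prod.fst) (S.image Prod.snd) := by
  intro _ hi _ hl
  obtain ⟨⟨i, j⟩, hij, rfl⟩ := mem_image.mp hi
  obtain ⟨⟨k, l⟩, hkl, rfl⟩ := mem_image.mp hl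
  dsimp only
  refine (hM i l).resolve_left fun hzero => ?_
  have hil : d * (u i * v l) ^ 2 < e := by
    have := (entry_le_weightedError (weight_nonneg hW (by linarith)) M u v i l).trans_lt h
    simpa [hW, hzero] using this
  have hkj := sq_lt_of_weightedError_lt hM hW hd he h k j
  have hprod : a ^ 2 < (u i * v j) * (u k * v l) := by
    rw [sq]; exact mul_lt_mul'' (hS _ hij) (hS _ hkl) ha0 ha0
  -- rank one: the product over the diagonal (i,j),(k,l) equals the one over (i,l),(k,j)
  have hrect : d * ((u i * v j) * (u k * v l)) ^ 2 < e * (4 * e) := by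
    calc d * ((u i * v j) * (u k * v l)) ^ 2
        = d * (u i * v l) ^ 2 * (u k * v j) ^ 2 := by ring
      _ < e * (4 * e) := mul_lt_mul'' hil hkj (by positivity) (sq_nonneg _)
  have : d * a ^ 4 < d * ((u i * v j) * (u k * v l)) ^ 2 := by
    rw [show a ^ 4 = (a ^ 2) ^ 2 by ring]
    exact mul_lt_mul_of_pos_left (pow_lt_pow_left₀ hprod (by positivity) two_ne_zero)
      (by linarith)
  nlinarith

lemma card_sub_mul_le_weightedError (hM : ∀ i j, M i j = 0 ∨ M i j = 1)
    (hW : ∀ i j, W i j = if M i j = 1 then 1 else d) {Estar : ℕ}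
    (hmax : ∀ I J, IsBiclique M I J → #I * #J ≤ Estar) (he : 1 ≤ (#(oneEntries M) : ℝ))
    (hd : 64 * (#(oneEntries M) : ℝ) ^ 6 ≤ d) {u : Fin m → ℝ} {v : Fin n → ℝ}
    (h : weightedError W M u v < #(oneEntries M)) :
    ((#(oneEntries M) : ℝ) - Estar) * (1 - 1 / (2 * #(oneEntries M))) ^ 2
      ≤ weightedError W M u v := by
  set e : ℝ := (#(oneEntries M) : ℝ)
  set a : ℝ := 1 / (2 * e) with ha_def
  have ha0 : 0 < a := by positivity
  have ha1 : a ≤ 1 := by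
    rw [ha_def, div_le_one (by positivity)]; linarith
  have ha : 4 * e ^ 2 ≤ a ^ 4 * d := by
    calc 4 * e ^ 2 = a ^ 4 * (64 * e ^ 6) := by rw [ha_def]; field_simp; ring
      _ ≤ a ^ 4 * d := by gcongr
  have hd1 : 1 ≤ d := le_trans (by nlinarith [one_le_pow₀ (n := 6) he]) hd
  have hcard : (#(nearOneEntries M u v a) : ℝ) ≤ Estar := by
    exact_mod_cast card_le_of_isBiclique_image hmax
      (isBiclique_image_of_weightedError_lt hM hW hd1 he h ha0.le ha
        fun _ => lt_of_mem_nearOneEntries ha1)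
  calc (e - Estar) * (1 - a) ^ 2 ≤ (e - #(nearOneEntries M u v a)) * (1 - a) ^ 2 := by gcongr
    _ ≤ weightedError W M u v := card_sub_card_nearOneEntries_mul_le hW (by linarith) a u v

lemma sub_one_lt_weightedError (hM : ∀ i j, M i j = 0 ∨ M i j = 1)
    (hW : ∀ i j, W i j = if M i j = 1 then 1 else d) {Estar : ℕ}
    (hmax : ∀ I J, IsBiclique M I J → #I * #J ≤ Estar) (hEE : Estar < #(oneEntries M))
    (hd : 64 * (#(oneEntries M) : ℝ) ^ 6 ≤ d) (u : Fin m → ℝ) (v : Fin n → ℝ) :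
    (#(oneEntries M) : ℝ) - Estar - 1 < weightedError W M u v := by
  have hEe : (Estar : ℝ) + 1 ≤ #(oneEntries M) := by exact_mod_cast hEE
  have hEstar : (0 : ℝ) ≤ Estar := Nat.cast_nonneg _
  by_contra! h
  have hlower := card_sub_mul_le_weightedError hM hW hmax (by linarith) hd (by linarith)
  have hkey := sub_one_lt_mul_one_sub_sq (c := #(oneEntries M) - Estar) (e := #(oneEntries M))
    (by linarith) (by linarith)
  linarith

end ZeroOne

theorem stmt_10 {m n : ℕ} (M W : Matrix (Fin m) (Fin n) ℝ) (d : ℝ)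
    (hM : ∀ i j, M i j = 0 ∨ M i j = 1)
    (hW : ∀ i j, W i j = if M i j = 1 then 1 else d)
    (E : ℕ) (hE : (E : ℝ) = ∑ i, ∑ j, M i j)
    (Estar : ℕ)
    (hEstar_ex : ∃ (I : Finset (Fin m)) (J : Finset (Fin n)),
      IsBiclique M I J ∧ I.card * J.card = Estar)
    (hEstar_max : ∀ (I : Finset (Fin m)) (J : Finset (Fin n)),
      IsBiclique M I J → I.card * J.card ≤ Estar)
    (hEE : Estar < E) (hd : ((2 * E : ℕ) : ℝ) ^ 6 ≤ d)
    (pstar : ℝ)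
    (hpstar : IsLeast {e : ℝ | ∃ (u : Fin m → ℝ) (v : Fin n → ℝ),
      e = ∑ i, ∑ j, W i j * (M i j - u i * v j) ^ 2} pstar) :
    (Estar : ℤ) = (E : ℤ) - ⌈pstar⌉ := by
  have hcard : E = #(oneEntries M) := by
    exact_mod_cast hE.trans (sum_eq_card_oneEntries hM)
  subst hcard
  obtain ⟨⟨u, v, rfl⟩, hleast⟩ := hpstar
  obtain ⟨I, J, hIJ, rfl⟩ := hEstar_ex
  have hupper : weightedError W M u v ≤ #(oneEntries M) - #I * #J := by
    rw [← weightedError_biclique_indicator hM hW hIJ]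
    exact hleast ⟨_, _, rfl⟩
  have hlower := sub_one_lt_weightedError hM hW hEstar_max hEE
    (by push_cast at hd; linarith) u v
  push_cast at hlower
  have hceil : ⌈weightedError W M u v⌉ = (#(oneEntries M) : ℤ) - #I * #J :=
    Int.ceil_eq_iff.mpr ⟨by push_cast; linarith, by push_cast; linarith⟩
  change (↑(#I * #J) : ℤ) = _ - ⌈weightedError W M u v⌉
  rw [hceil]; push_cast; ring
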